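/- Let F be a finite field and let α₁,...,α_k be pairwise distinct elements of F. The number of matrices A ∈ Mₙ(F) that are similar to a diagonal matrix whose diagonal entries include every α_i at least once and contain only values from {α₁,...,α_k} equals the sum over all tuples (n₁,...,n_k) of positive integers with n₁+...+n_k = n of |GLₙ(F)| / (|GL_{n₁}(F)|·...·|GL_{n_k}(F)|). -/

import Mathlib

/-!
A matrix in the set is conjugate to `diagonal (α ∘ d)` for a surjective labelling
`d : Fin n → Fin k`, and the multiplicity of `αᵢ` as a root of its characteristic polynomial is the
size of the fibre `d⁻¹ {i}`. Diagonal matrices whose labellings have the same fibre sizes differ by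
a permutation, hence are conjugate, so the set splits into one conjugacy orbit per composition
`(n₁, …, n_k)` of `n`. The centraliser of `diagonal (α ∘ d)` in `GLₙ(F)` consists of the invertible
matrices that are block diagonal along the fibres of `d`, so by orbit–stabiliser that orbit has
`|GLₙ(F)| / ∏ᵢ |GL_{nᵢ}(F)|` elements.
-/

open Matrix MulAction Polynomial

section ConjAct

variable {M : Type*} [Monoid M]

theorem mem_orbit_conjAct_units_iff {a b : M} :
    a ∈ orbit (ConjAct Mˣ) b ↔ ∃ P : Mˣ, a = P * b * ↑P⁻¹ := by
  simp only [mem_orbit_iff, ConjAct.units_smul_def, eq_comm (a := a)]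
  exact ConjAct.toConjAct.toEquiv.symm.exists_congr_left

theorem mem_stabilizer_conjAct_units_iff {a : M} {g : ConjAct Mˣ} :
    g ∈ stabilizer (ConjAct Mˣ) a ↔ Commute (↑(ConjAct.ofConjAct g) : M) a := by
  rw [mem_stabilizer_iff, ConjAct.units_smul_def, Units.mul_inv_eq_iff_eq_mul, commute_iff_eq]

end ConjAct

theorem MulAction.card_orbit_eq_div {G X : Type*} [Group G] [Finite G] [MulAction G X] (x : X) :
    Nat.card (orbit G x) = Nat.card G / Nat.card (stabilizer G x) := by
  rw [← Subgroup.card_mul_index (stabilizer G x), index_stabilizer, Nat.card_coe_set_eq,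
    Nat.mul_div_cancel_left _ Nat.card_pos]

theorem Units.mem_range_map_iff {S T : Type*} [Monoid S] [Monoid T] {f : S →* T}
    (hf : Function.Injective f) {u : Tˣ} :
    u ∈ (Units.map f).range ↔ ↑u ∈ Set.range f ∧ ↑u⁻¹ ∈ Set.range f := by
  constructor
  · rintro ⟨v, rfl⟩
    exact ⟨⟨v, rfl⟩, ⟨↑v⁻¹, rfl⟩⟩
  · rintro ⟨⟨a, ha⟩, ⟨b, hb⟩⟩
    refine ⟨⟨a, b, hf ?_, hf ?_⟩, Units.ext ha⟩ <;> simp [ha, hb]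

theorem Matrix.natCard_units_congr {m n R : Type*} [Fintype m] [DecidableEq m] [Fintype n]
    [DecidableEq n] [Semiring R] (e : m ≃ n) :
    Nat.card (Matrix m m R)ˣ = Nat.card (Matrix n n R)ˣ :=
  Nat.card_congr (Units.mapEquiv (reindexRingEquiv R e).toMulEquiv).toEquiv

section Fibers

variable {ι κ : Type*}

noncomputable def fiberCard (d : ι → κ) (i : κ) : ℕ := Nat.card {j // d j = i}

theorem sum_fiberCard [Finite ι] [Fintype κ] (d : ι → κ) : ∑ i, fiberCard d i = Nat.card ι := by
  rw [← Nat.card_congr (Equiv.sigmaFiberEquiv d), Nat.card_sigma]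
  rfl

theorem surjective_iff_forall_fiberCard_pos [Finite ι] {d : ι → κ} :
    Function.Surjective d ↔ ∀ i, 0 < fiberCard d i := by
  simp only [fiberCard, Nat.card_pos_iff, nonempty_subtype, and_iff_left Subtype.finite]
  rfl

theorem exists_fiberCard_eq [Finite ι] [Fintype κ] (m : κ → ℕ) (h : ∑ i, m i = Nat.card ι) :
    ∃ d : ι → κ, fiberCard d = m := by
  obtain ⟨e⟩ : Nonempty (ι ≃ Σ i, Fin (m i)) := by
    rw [← Finite.card_eq, Nat.card_sigma]
    simpa using h.symm
  refine ⟨fun j => (e j).1, funext fun i => ?_⟩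
  rw [fiberCard, Nat.card_congr ((e.subtypeEquiv fun _ => Iff.rfl).trans (Equiv.sigmaSubtype i)),
    Nat.card_fin]

theorem exists_perm_comp_eq_of_fiberCard_eq [Finite ι] {d d' : ι → κ}
    (h : fiberCard d = fiberCard d') : ∃ e : Equiv.Perm ι, d ∘ e = d' := by
  have hfib (i : κ) : Nonempty ({j // d' j = i} ≃ {j // d j = i}) :=
    Finite.card_eq.mp (congrFun h i).symm
  refine ⟨(Equiv.sigmaFiberEquiv d').symm.trans ((Equiv.sigmaCongrRight fun i =>
    (hfib i).some).trans (Equiv.sigmaFiberEquiv d)), funext fun j => ?_⟩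
  exact ((hfib (d' j)).some ⟨j, rfl⟩).2

end Fibers

section BlockDiagonal

variable {ι κ R : Type*} [Fintype ι] [DecidableEq ι] [Fintype κ] [DecidableEq κ] [Semiring R]

def blockDiagonalFiber (d : ι → κ) :
    (Π i, Matrix {j // d j = i} {j // d j = i} R) →+* Matrix ι ι R :=
  (reindexRingEquiv R (Equiv.sigmaFiberEquiv d)).toRingHom.comp (blockDiagonal'RingHom _ R)

theorem blockDiagonalFiber_apply (d : ι → κ) (B : Π i, Matrix {j // d j = i} {j // d j = i} R)
    (p q : ι) : blockDiagonalFiber d B p q = blockDiagonal' B ⟨d p, p, rfl⟩ ⟨d q, q, rfl⟩ :=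
  rfl

theorem blockDiagonalFiber_injective (d : ι → κ) :
    Function.Injective (blockDiagonalFiber (R := R) d) :=
  (reindexRingEquiv R (Equiv.sigmaFiberEquiv d)).injective.comp blockDiagonal'_injective

theorem mem_range_blockDiagonalFiber_iff {d : ι → κ} {M : Matrix ι ι R} :
    M ∈ Set.range (blockDiagonalFiber d) ↔ ∀ p q, d p ≠ d q → M p q = 0 := by
  constructor
  · rintro ⟨B, rfl⟩ p q hpq
    exact blockDiagonal'_apply_ne B _ _ hpq
  · refine fun h => ⟨fun i => M.toSquareBlock d i, Matrix.ext fun p q => ?_⟩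
    rw [blockDiagonalFiber_apply]
    by_cases hpq : d p = d q
    · have : (⟨d q, q, rfl⟩ : Σ i, {j // d j = i}) = ⟨d p, q, hpq.symm⟩ :=
        Sigma.subtype_ext hpq.symm rfl
      rw [this, blockDiagonal'_apply_eq]
      rfl
    · rw [blockDiagonal'_apply_ne _ _ _ hpq, h p q hpq]

end BlockDiagonal

namespace Matrix

variable {ι κ R : Type*} [Fintype ι] [DecidableEq ι] [CommRing R]

theorem commute_diagonal_iff [NoZeroDivisors R] {M : Matrix ι ι R} {v : ι → R} :
    Commute M (diagonal v) ↔ ∀ p q, v p ≠ v q → M p q = 0 := by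
  simp only [commute_iff_eq, ← Matrix.ext_iff, mul_diagonal, diagonal_mul]
  refine forall₂_congr fun p q => ⟨fun h hpq => ?_, fun h => ?_⟩
  · have : M p q * (v q - v p) = 0 := by linear_combination h
    exact (mul_eq_zero.mp this).resolve_right (sub_ne_zero.mpr hpq.symm)
  · by_cases hpq : v p = v q
    · rw [hpq, mul_comm]
    · simp [h hpq]

theorem charpoly_diagonal_roots [IsDomain R] (v : ι → R) :
    (diagonal v).charpoly.roots = Finset.univ.val.map v := by
  rw [charpoly_diagonal, Finset.prod_eq_multiset_prod,
    ← roots_multiset_prod_X_sub_C (Finset.univ.val.map v), Multiset.map_map]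
  rfl

theorem diagonal_comp_perm_mem_orbit (v : ι → R) (e : Equiv.Perm ι) :
    diagonal (v ∘ e) ∈ orbit (ConjAct (Matrix ι ι R)ˣ) (diagonal v) := by
  let P : (Matrix ι ι R)ˣ := ⟨e.permMatrix R, e⁻¹.permMatrix R,
    by rw [← permMatrix_mul, inv_mul_cancel, permMatrix_one],
    by rw [← permMatrix_mul, mul_inv_cancel, permMatrix_one]⟩
  refine mem_orbit_conjAct_units_iff.mpr ⟨P, ?_⟩
  change _ = e.permMatrix R * diagonal v * e⁻¹.permMatrix R
  rw [PEquiv.toMatrix_toPEquiv_mul, PEquiv.mul_toMatrix_toPEquiv, submatrix_submatrix]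
  exact (submatrix_diagonal_equiv v e).symm

variable {α : κ → R}

theorem diagonal_mem_orbit_of_fiberCard_eq {d d' : ι → κ} (h : fiberCard d = fiberCard d') :
    (diagonal fun j => α (d' j)) ∈ orbit (ConjAct (Matrix ι ι R)ˣ) (diagonal fun j => α (d j)) := by
  obtain ⟨e, rfl⟩ := exists_perm_comp_eq_of_fiberCard_eq h
  exact diagonal_comp_perm_mem_orbit (fun j => α (d j)) e

variable [DecidableEq κ]

theorem count_roots_charpoly_of_mem_orbit [IsDomain R] [DecidableEq R]
    (hα : Function.Injective α) {d : ι → κ} {A : Matrix ι ι R}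
    (hA : A ∈ orbit (ConjAct (Matrix ι ι R)ˣ) (diagonal fun j => α (d j)))
    (i : κ) : A.charpoly.roots.count (α i) = fiberCard d i := by
  obtain ⟨P, rfl⟩ := mem_orbit_conjAct_units_iff.mp hA
  rw [coe_units_inv, charpoly_units_conj, charpoly_diagonal_roots, Multiset.count_map, fiberCard,
    Nat.card_eq_fintype_card, Fintype.card_subtype]
  simp_rw [hα.eq_iff, eq_comm (a := i)]
  rfl

theorem mem_orbit_diagonal_iff [IsDomain R] [DecidableEq R] (hα : Function.Injective α)
    {d : ι → κ} (hd : Function.Surjective d) {A : Matrix ι ι R} :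
    A ∈ orbit (ConjAct (Matrix ι ι R)ˣ) (diagonal fun j => α (d j)) ↔
      (∃ d' : ι → κ, Function.Surjective d' ∧
        A ∈ orbit (ConjAct (Matrix ι ι R)ˣ) (diagonal fun j => α (d' j))) ∧
      (fun i => A.charpoly.roots.count (α i)) = fiberCard d := by
  refine ⟨fun hA => ⟨⟨d, hd, hA⟩, funext (count_roots_charpoly_of_mem_orbit hα hA)⟩, ?_⟩
  rintro ⟨⟨d', -, hA⟩, hcount⟩
  have hfib : fiberCard d = fiberCard d' :=
    hcount.symm.trans (funext (count_roots_charpoly_of_mem_orbit hα hA))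
  rwa [← orbit_eq_iff.mpr (diagonal_mem_orbit_of_fiberCard_eq hfib)]

variable [Fintype κ]

theorem commute_diagonal_iff_mem_range_blockDiagonalFiber [NoZeroDivisors R]
    (hα : Function.Injective α) {d : ι → κ} {M : Matrix ι ι R} :
    Commute M (diagonal fun j => α (d j)) ↔ M ∈ Set.range (blockDiagonalFiber d) := by
  rw [commute_diagonal_iff, mem_range_blockDiagonalFiber_iff]
  exact forall₂_congr fun p q => imp_congr_left hα.ne_iff

theorem card_stabilizer_diagonal [NoZeroDivisors R] (hα : Function.Injective α) (d : ι → κ) :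
    Nat.card (stabilizer (ConjAct (Matrix ι ι R)ˣ) (diagonal fun j => α (d j))) =
      ∏ i, Nat.card (Matrix {j // d j = i} {j // d j = i} R)ˣ := by
  have hf : Function.Injective (blockDiagonalFiber (R := R) d).toMonoidHom :=
    blockDiagonalFiber_injective d
  have hcomm (M : Matrix ι ι R) :=
    commute_diagonal_iff_mem_range_blockDiagonalFiber (M := M) (d := d) hα
  have hstab (g : ConjAct (Matrix ι ι R)ˣ) :
      g ∈ stabilizer (ConjAct (Matrix ι ι R)ˣ) (diagonal fun j => α (d j)) ↔
        ConjAct.ofConjAct g ∈ (Units.map (blockDiagonalFiber d).toMonoidHom).range := by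
    rw [mem_stabilizer_conjAct_units_iff, Units.mem_range_map_iff hf]
    exact ⟨fun h => ⟨(hcomm _).1 h, (hcomm _).1 h.units_inv_left⟩, fun h => (hcomm _).2 h.1⟩
  calc _ = Nat.card (Units.map (blockDiagonalFiber (R := R) d).toMonoidHom).range :=
        Nat.card_congr (ConjAct.ofConjAct.toEquiv.subtypeEquiv hstab)
    _ = Nat.card (Π i, Matrix {j // d j = i} {j // d j = i} R)ˣ :=
        Nat.card_congr (MonoidHom.ofInjective (Units.map_injective hf)).toEquiv.symm
    _ = _ := by rw [Nat.card_congr MulEquiv.piUnits.toEquiv, Nat.card_pi]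

theorem card_orbit_diagonal [NoZeroDivisors R] [Finite R] (hα : Function.Injective α)
    (d : ι → κ) :
    Nat.card (orbit (ConjAct (Matrix ι ι R)ˣ) (diagonal fun j => α (d j))) =
      Nat.card (Matrix ι ι R)ˣ /
        ∏ i, Nat.card (Matrix (Fin (fiberCard d i)) (Fin (fiberCard d i)) R)ˣ := by
  have : Finite (ConjAct (Matrix ι ι R)ˣ) := Finite.of_equiv _ ConjAct.toConjAct.toEquiv
  rw [card_orbit_eq_div, card_stabilizer_diagonal hα, Nat.card_congr ConjAct.ofConjAct.toEquiv]
  congr 1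
  exact Finset.prod_congr rfl fun i _ => natCard_units_congr (Finite.equivFin _)

end Matrix

open Finset in
theorem stmt_3_general (F : Type) [Field F] [Fintype F] (n k : ℕ)
    (α : Fin k → F) (hα : Function.Injective α) :
    Nat.card {A : Matrix (Fin n) (Fin n) F //
        ∃ (d : Fin n → Fin k) (P : (Matrix (Fin n) (Fin n) F)ˣ),
          Function.Surjective d ∧
          A = (P : Matrix (Fin n) (Fin n) F) * Matrix.diagonal (fun j => α (d j)) *
              ((P⁻¹ : _) : Matrix (Fin n) (Fin n) F)} =
      ∑ m ∈ (Finset.Nat.antidiagonalTuple k n).filter (fun m => ∀ i, 1 ≤ m i),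
        Nat.card (Matrix (Fin n) (Fin n) F)ˣ /
          ∏ i : Fin k, Nat.card (Matrix (Fin (m i)) (Fin (m i)) F)ˣ := by
  classical
  simp only [← mem_orbit_conjAct_units_iff, exists_and_left]
  rw [Nat.card_eq_fintype_card, Fintype.card_subtype,
    card_eq_sum_card_fiberwise (f := fun A i => A.charpoly.roots.count (α i))
      (t := (Nat.antidiagonalTuple k n).filter (fun m => ∀ i, 1 ≤ m i)) ?maps]
  case maps =>
    intro A hA
    obtain ⟨d, hd, hA⟩ := (mem_filter.mp hA).2
    simpa [Nat.mem_antidiagonalTuple, count_roots_charpoly_of_mem_orbit hα hA, sum_fiberCard,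
      Nat.one_le_iff_ne_zero, Nat.pos_iff_ne_zero]
      using surjective_iff_forall_fiberCard_pos.mp hd
  refine sum_congr rfl fun m hm => ?_
  obtain ⟨hsum, hpos⟩ := mem_filter.mp hm
  obtain ⟨d, rfl⟩ :=
    exists_fiberCard_eq m ((Nat.mem_antidiagonalTuple.mp hsum).trans (Nat.card_fin n).symm)
  rw [← card_orbit_diagonal hα d, filter_filter, Nat.card_eq_card_toFinset]
  congr 1
  ext A
  simp [mem_orbit_diagonal_iff hα (surjective_iff_forall_fiberCard_pos.mpr hpos)]

/-- The number of `n × n` matrices over a finite field that are diagonalizable with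
every `αᵢ` an eigenvalue and all eigenvalues in `{α₁, …, α_k}` equals
`∑_{n₁+⋯+n_k = n, nᵢ ≥ 1} |GLₙ(F)| / ∏ᵢ |GL_{nᵢ}(F)|`. -/
theorem stmt_3 (F : Type) [Field F] [Fintype F] [DecidableEq F] (n k : ℕ)
    (hk : 1 ≤ k) (hkn : k ≤ n)
    (α : Fin k → F) (hα : Function.Injective α) :
    Nat.card {A : Matrix (Fin n) (Fin n) F //
        ∃ (d : Fin n → Fin k) (P : (Matrix (Fin n) (Fin n) F)ˣ),
          Function.Surjective d ∧
          A = (P : Matrix (Fin n) (Fin n) F) * Matrix.diagonal (fun j => α (d j)) *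
              ((P⁻¹ : _) : Matrix (Fin n) (Fin n) F)} =
      ∑ m ∈ (Finset.Nat.antidiagonalTuple k n).filter (fun m => ∀ i, 1 ≤ m i),
        Nat.card (Matrix (Fin n) (Fin n) F)ˣ /
          ∏ i : Fin k, Nat.card (Matrix (Fin (m i)) (Fin (m i)) F)ˣ :=
  stmt_3_general F n k α hα
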